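/- Assume n ≥ 2, c̃_1 ≥ 0, c̃_2 ≥ 0 and 0 ≤ ζ ≤ √2, and for 1 ≤ i ≤ n define r̃_i : ℝ^m × ℝ^m → ℝ by r̃_i(x,y) = n Σ_{l ∈ L_i, 1 ≤ l ≤ m} y_l ⟨b̃_l, x⟩ + (c̃_1/2)‖x‖² − (c̃_2/2)‖y‖² − n x_1 if i = 1, and the same expression without the term −n x_1 if 2 ≤ i ≤ n. Then: (i) each r̃_i is (c̃_1, c̃_2)-convex-concave; (ii) each r̃_i is L-smooth as a function of the joint variable (x,y), with L = √(4n² + 2 max{c̃_1, c̃_2}²); (iii) the family {r̃_i}_{i=1}^n is L'-average smooth with L' = √(8n + 2 max{c̃_1, c̃_2}²). -/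

import Mathlib

open scoped RealInnerProductSpace BigOperators

/-!
Each `r̃_i` is a bilinear saddle function `ν ⟪y, M x⟫ + c₁/2 ‖x‖² - c₂/2 ‖y‖² - ⟪a, x⟫` whose
`M` is the analysis operator `x ↦ (⟪b̃_l, x⟫)_{l ∈ L_i}`. Its gradient is affine with linear part
`(x, y) ↦ (ν M* y + c₁ x, ν M x - c₂ y)`, so both smoothness constants reduce to bounds on `M`
and `M*`. Two indices of one class `L_i` differ by at least `n ≥ 2`, so the vectors `b̃_l`,
`l ∈ L_i`, have disjoint supports; being pairwise orthogonal with `‖b̃_l‖² ≤ 2`, they give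
`‖M‖ ≤ √2`. For the average, the classes partition the indices, and splitting them instead by
parity (the classes for `n = 2`) gives `∑_l ⟪b̃_l, x⟫² ≤ 4 ‖x‖²`.
-/

/-- View a function of two variables `x, y ∈ ℝ^m` as a function of the joint variable
`(x,y)` in the product space with the norm `‖(x,y)‖ = √(‖x‖² + ‖y‖²)`. -/
noncomputable def jointFun {m : ℕ} (f : EuclideanSpace ℝ (Fin m) → EuclideanSpace ℝ (Fin m) → ℝ) :
    WithLp 2 (EuclideanSpace ℝ (Fin m) × EuclideanSpace ℝ (Fin m)) → ℝ :=
  fun z => f ((WithLp.equiv 2 _) z).1 ((WithLp.equiv 2 _) z).2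

section AnalysisOperator

open ContinuousLinearMap

variable {ι E : Type*} [NormedAddCommGroup E] [InnerProductSpace ℝ E]

theorem norm_sq_sum_smul_of_pairwise_inner_eq_zero {S : Finset ι} {B : ι → E}
    (hB : (S : Set ι).Pairwise fun l l' => ⟪B l, B l'⟫ = 0) (c : ι → ℝ) :
    ‖∑ l ∈ S, c l • B l‖ ^ 2 = ∑ l ∈ S, c l ^ 2 * ‖B l‖ ^ 2 := by
  rw [← real_inner_self_eq_norm_sq, sum_inner]
  refine Finset.sum_congr rfl fun l hl => ?_
  rw [inner_sum, Finset.sum_eq_single_of_mem l hl fun l' hl' hne => ?_]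
  · rw [real_inner_smul_left, real_inner_smul_right, real_inner_self_eq_norm_sq]; ring
  · rw [real_inner_smul_left, real_inner_smul_right, hB hl hl' hne.symm, mul_zero, mul_zero]

variable [Fintype ι]

theorem sum_sq_apply_le_norm_sq (S : Finset ι) (y : EuclideanSpace ℝ ι) :
    ∑ l ∈ S, y l ^ 2 ≤ ‖y‖ ^ 2 := by
  simp only [EuclideanSpace.norm_sq_eq, Real.norm_eq_abs, sq_abs]
  exact Finset.sum_le_sum_of_subset_of_nonneg (Finset.subset_univ S) fun l _ _ => sq_nonneg _

variable [DecidableEq ι]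

noncomputable def analysisOp (S : Finset ι) (B : ι → E) : E →L[ℝ] EuclideanSpace ℝ ι :=
  ∑ l ∈ S, (innerSL ℝ (B l)).smulRight (EuclideanSpace.single l 1)

variable (S : Finset ι) (B : ι → E)

theorem analysisOp_apply_apply (x : E) (k : ι) :
    analysisOp S B x k = if k ∈ S then ⟪B k, x⟫ else 0 := by
  simp [analysisOp, Finset.sum_apply, Pi.single_apply]

theorem inner_analysisOp (x : E) (y : EuclideanSpace ℝ ι) :
    ⟪y, analysisOp S B x⟫ = ∑ l ∈ S, y l * ⟪B l, x⟫ := by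
  simp [PiLp.inner_apply, analysisOp_apply_apply, mul_comm]

theorem norm_sq_analysisOp (x : E) :
    ‖analysisOp S B x‖ ^ 2 = ∑ l ∈ S, ⟪B l, x⟫ ^ 2 := by
  rw [← real_inner_self_eq_norm_sq, inner_analysisOp]
  refine Finset.sum_congr rfl fun l hl => ?_
  simp [analysisOp_apply_apply, hl, sq]

theorem adjoint_analysisOp_apply [CompleteSpace E] (y : EuclideanSpace ℝ ι) :
    adjoint (analysisOp S B) y = ∑ l ∈ S, y l • B l :=
  ext_inner_right ℝ fun x => by
    simp [adjoint_inner_left, inner_analysisOp, sum_inner, real_inner_smul_left]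

variable {S B}

theorem norm_sq_adjoint_analysisOp_le [CompleteSpace E] {K : ℝ}
    (hB : (S : Set ι).Pairwise fun l l' => ⟪B l, B l'⟫ = 0) (hK : ∀ l, ‖B l‖ ^ 2 ≤ K)
    (y : EuclideanSpace ℝ ι) :
    ‖adjoint (analysisOp S B) y‖ ^ 2 ≤ K * ∑ l ∈ S, y l ^ 2 := by
  rw [adjoint_analysisOp_apply, norm_sq_sum_smul_of_pairwise_inner_eq_zero hB, Finset.mul_sum]
  exact Finset.sum_le_sum fun l _ => by nlinarith [hK l, sq_nonneg (y l)]

theorem norm_analysisOp_sq_le [CompleteSpace E] {K : ℝ} (hK0 : 0 ≤ K)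
    (hB : (S : Set ι).Pairwise fun l l' => ⟪B l, B l'⟫ = 0) (hK : ∀ l, ‖B l‖ ^ 2 ≤ K) :
    ‖analysisOp S B‖ ^ 2 ≤ K := by
  rw [← LinearIsometryEquiv.norm_map adjoint, ← Real.sq_sqrt hK0]
  gcongr
  refine opNorm_le_bound _ (Real.sqrt_nonneg K) fun y => ?_
  rw [← Real.sqrt_sq (norm_nonneg y), ← Real.sqrt_mul hK0, ← Real.sqrt_sq (norm_nonneg _)]
  refine Real.sqrt_le_sqrt ?_
  calc _ ≤ K * ∑ l ∈ S, y l ^ 2 := norm_sq_adjoint_analysisOp_le hB hK y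
    _ ≤ K * ‖y‖ ^ 2 := mul_le_mul_of_nonneg_left (sum_sq_apply_le_norm_sq S y) hK0

end AnalysisOperator

theorem norm_apply_sq_le {G H : Type*} [SeminormedAddCommGroup G] [NormedSpace ℝ G]
    [SeminormedAddCommGroup H] [NormedSpace ℝ H] (T : G →L[ℝ] H) (x : G) :
    ‖T x‖ ^ 2 ≤ ‖T‖ ^ 2 * ‖x‖ ^ 2 := by
  rw [← mul_pow]; gcongr; exact T.le_opNorm x

theorem norm_add_sq_le_two_mul {G : Type*} [NormedAddCommGroup G] [InnerProductSpace ℝ G]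
    (x y : G) :
    ‖x + y‖ ^ 2 ≤ 2 * (‖x‖ ^ 2 + ‖y‖ ^ 2) := by
  rw [← parallelogram_law_with_norm ℝ]
  exact le_add_of_nonneg_right (sq_nonneg _)

section BilinearSaddle

open ContinuousLinearMap WithLp

variable {E F : Type*} [NormedAddCommGroup E] [InnerProductSpace ℝ E]
  [NormedAddCommGroup F] [InnerProductSpace ℝ F]

noncomputable def bilinearSaddle (ν c₁ c₂ : ℝ) (M : E →L[ℝ] F) (a : E) (x : E) (y : F) : ℝ :=
  ν * ⟪y, M x⟫ + c₁ / 2 * ‖x‖ ^ 2 - c₂ / 2 * ‖y‖ ^ 2 - ⟪a, x⟫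

variable (ν c₁ c₂ : ℝ) (M : E →L[ℝ] F) (a : E)

theorem convexOn_bilinearSaddle_sub (y : F) :
    ConvexOn ℝ Set.univ
      fun x => bilinearSaddle ν c₁ c₂ M a x y - c₁ / 2 * ‖x‖ ^ 2 + c₂ / 2 * ‖y‖ ^ 2 := by
  have hlin : (fun x => bilinearSaddle ν c₁ c₂ M a x y - c₁ / 2 * ‖x‖ ^ 2 + c₂ / 2 * ‖y‖ ^ 2)
      = ⇑(ν • (innerSL ℝ y).comp M - innerSL ℝ a) := by
    ext x; simp [bilinearSaddle]; ring
  rw [hlin]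
  exact LinearMap.convexOn _ convex_univ

theorem concaveOn_bilinearSaddle_sub (x : E) :
    ConcaveOn ℝ Set.univ
      fun y => bilinearSaddle ν c₁ c₂ M a x y - c₁ / 2 * ‖x‖ ^ 2 + c₂ / 2 * ‖y‖ ^ 2 := by
  have hlin : (fun y => bilinearSaddle ν c₁ c₂ M a x y - c₁ / 2 * ‖x‖ ^ 2 + c₂ / 2 * ‖y‖ ^ 2)
      = fun y => (ν • innerSL ℝ (M x)) y - ⟪a, x⟫ := by
    ext y; simp [bilinearSaddle, real_inner_comm]; ring
  rw [hlin]
  exact (LinearMap.concaveOn _ convex_univ).add_const _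

noncomputable def jointSaddle (z : WithLp 2 (E × F)) : ℝ :=
  bilinearSaddle ν c₁ c₂ M a z.fst z.snd

variable [CompleteSpace E] [CompleteSpace F]

theorem hasGradientAt_jointSaddle (z : WithLp 2 (E × F)) :
    HasGradientAt (jointSaddle ν c₁ c₂ M a)
      (toLp 2 (ν • adjoint M z.snd + c₁ • z.fst - a, ν • M z.fst - c₂ • z.snd)) z := by
  have hfst := (fstL 2 ℝ E F).hasFDerivAt (x := z)
  have hsnd := (sndL 2 ℝ E F).hasFDerivAt (x := z)
  have hD := ((((hsnd.inner ℝ (M.hasFDerivAt.comp z hfst)).const_mul ν).add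
    (hfst.norm_sq.const_mul (c₁ / 2))).sub (hsnd.norm_sq.const_mul (c₂ / 2))).sub
    ((innerSL ℝ a).hasFDerivAt.comp z hfst)
  rw [hasGradientAt_iff_hasFDerivAt]
  refine hD.congr_fderiv (ContinuousLinearMap.ext fun w => ?_)
  simp [inner_add_left, inner_sub_left, real_inner_smul_left, adjoint_inner_left,
    fderivInnerCLM_apply]
  rw [real_inner_comm (M z.fst)]
  ring

theorem gradient_jointSaddle_sub (u v : WithLp 2 (E × F)) :
    gradient (jointSaddle ν c₁ c₂ M a) u - gradient (jointSaddle ν c₁ c₂ M a) v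
      = toLp 2 (ν • adjoint M (u - v).snd + c₁ • (u - v).fst,
          ν • M (u - v).fst - c₂ • (u - v).snd) := by
  rw [(hasGradientAt_jointSaddle ν c₁ c₂ M a u).gradient,
    (hasGradientAt_jointSaddle ν c₁ c₂ M a v).gradient, ← toLp_sub]
  congr 1
  ext <;> simp <;> module

theorem norm_sq_gradient_jointSaddle_sub_le (u v : WithLp 2 (E × F)) :
    ‖gradient (jointSaddle ν c₁ c₂ M a) u - gradient (jointSaddle ν c₁ c₂ M a) v‖ ^ 2
      ≤ 2 * ν ^ 2 * ‖adjoint M (u - v).snd‖ ^ 2 + 2 * c₁ ^ 2 * ‖(u - v).fst‖ ^ 2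
        + 2 * ν ^ 2 * ‖M (u - v).fst‖ ^ 2 + 2 * c₂ ^ 2 * ‖(u - v).snd‖ ^ 2 := by
  rw [gradient_jointSaddle_sub, prod_norm_sq_eq_of_L2, sub_eq_add_neg (ν • _)]
  have h₁ := norm_add_sq_le_two_mul (ν • adjoint M (u - v).snd) (c₁ • (u - v).fst)
  have h₂ := norm_add_sq_le_two_mul (ν • M (u - v).fst) (-(c₂ • (u - v).snd))
  simp only [norm_neg, norm_smul, mul_pow, Real.norm_eq_abs, sq_abs] at h₁ h₂
  simp only [toLp_fst, toLp_snd]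
  linarith

theorem sum_norm_sq_gradient_jointSaddle_sub_le {κ : Type*} (s : Finset κ)
    (M : κ → E →L[ℝ] F) (a : κ → E) {K : ℝ}
    (hMadj : ∀ y, ∑ i ∈ s, ‖adjoint (M i) y‖ ^ 2 ≤ K * ‖y‖ ^ 2)
    (hM : ∀ x, ∑ i ∈ s, ‖M i x‖ ^ 2 ≤ K * ‖x‖ ^ 2)
    (hc₁ : 0 ≤ c₁) (hc₂ : 0 ≤ c₂) (u v : WithLp 2 (E × F)) :
    ∑ i ∈ s,
        ‖gradient (jointSaddle ν c₁ c₂ (M i) (a i)) u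
          - gradient (jointSaddle ν c₁ c₂ (M i) (a i)) v‖ ^ 2
      ≤ (2 * ν ^ 2 * K + 2 * s.card * max c₁ c₂ ^ 2) * ‖u - v‖ ^ 2 := by
  refine (Finset.sum_le_sum fun i _ =>
    norm_sq_gradient_jointSaddle_sub_le ν c₁ c₂ (M i) (a i) u v).trans ?_
  simp only [Finset.sum_add_distrib, ← Finset.mul_sum, Finset.sum_const, nsmul_eq_mul]
  have h₁ : c₁ ^ 2 ≤ max c₁ c₂ ^ 2 := pow_le_pow_left₀ hc₁ (le_max_left _ _) 2
  have h₂ : c₂ ^ 2 ≤ max c₁ c₂ ^ 2 := pow_le_pow_left₀ hc₂ (le_max_right _ _) 2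
  have hν : 0 ≤ 2 * ν ^ 2 := by positivity
  have := mul_le_mul_of_nonneg_left (hMadj (u - v).snd) hν
  have := mul_le_mul_of_nonneg_left (hM (u - v).fst) hν
  have := mul_le_mul_of_nonneg_right h₁ (by positivity : 0 ≤ 2 * (s.card * ‖(u - v).fst‖ ^ 2))
  have := mul_le_mul_of_nonneg_right h₂ (by positivity : 0 ≤ 2 * (s.card * ‖(u - v).snd‖ ^ 2))
  rw [prod_norm_sq_eq_of_L2 (u - v)]
  linarith

theorem norm_gradient_jointSaddle_sub_le (hc₁ : 0 ≤ c₁) (hc₂ : 0 ≤ c₂)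
    (u v : WithLp 2 (E × F)) :
    ‖gradient (jointSaddle ν c₁ c₂ M a) u - gradient (jointSaddle ν c₁ c₂ M a) v‖
      ≤ √(2 * ν ^ 2 * ‖M‖ ^ 2 + 2 * max c₁ c₂ ^ 2) * ‖u - v‖ := by
  have hsq := sum_norm_sq_gradient_jointSaddle_sub_le ν c₁ c₂ {()} (fun _ => M) (fun _ => a)
    (fun y => by simpa using norm_apply_sq_le (adjoint M) y) (fun x => by
      simpa using norm_apply_sq_le M x) hc₁ hc₂ u v
  rw [← Real.sqrt_sq (norm_nonneg (u - v)), ← Real.sqrt_mul (by positivity),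
    Real.le_sqrt (norm_nonneg _) (by positivity)]
  simpa using hsq

end BilinearSaddle

section BandVectors

variable {m : ℕ}

noncomputable def bandVec (ζ : ℝ) (l : Fin m) : EuclideanSpace ℝ (Fin m) :=
  if h : (l : ℕ) + 1 < m then EuclideanSpace.single l 1 - EuclideanSpace.single ⟨l + 1, h⟩ 1
  else ζ • EuclideanSpace.single l 1

theorem bandVec_apply_eq_zero (ζ : ℝ) {l k : Fin m} (h₀ : (k : ℕ) ≠ l) (h₁ : (k : ℕ) ≠ l + 1) :
    bandVec ζ l k = 0 := by
  have : k ≠ l := fun h => h₀ (congrArg Fin.val h)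
  unfold bandVec
  split_ifs <;> simp [this, Fin.ext_iff, h₁]

theorem inner_bandVec_eq_zero (ζ : ℝ) {l l' : Fin m} (h : (l : ℕ) + 2 ≤ l') :
    ⟪bandVec ζ l, bandVec ζ l'⟫ = 0 := by
  refine Finset.sum_eq_zero fun k _ => ?_
  by_cases hk : (k : ℕ) = l ∨ (k : ℕ) = l + 1
  · rw [bandVec_apply_eq_zero ζ (l := l') (k := k) (by omega) (by omega)]; simp
  · obtain ⟨h₀, h₁⟩ := not_or.1 hk
    rw [bandVec_apply_eq_zero ζ h₀ h₁]; simp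

theorem norm_sq_bandVec_le {ζ : ℝ} (hζ : ζ ^ 2 ≤ 2) (l : Fin m) : ‖bandVec ζ l‖ ^ 2 ≤ 2 := by
  unfold bandVec
  split_ifs with h
  · have hne : l ≠ ⟨l + 1, h⟩ := by simp [Fin.ext_iff]
    rw [← real_inner_self_eq_norm_sq, inner_sub_left, inner_sub_right, inner_sub_right]
    simp [EuclideanSpace.inner_single_left, hne, hne.symm]
    norm_num
  · simpa [norm_smul, PiLp.norm_single] using hζ

theorem b_succ_eq_bandVec {b : ℕ → EuclideanSpace ℝ (Fin m)} {ζ : ℝ} (hm : 0 < m)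
    (hbl : ∀ (l : ℕ) (_h1 : 1 ≤ l) (_h2 : l ≤ m - 1),
      b l = EuclideanSpace.single (⟨l - 1, by omega⟩ : Fin m) 1
            - EuclideanSpace.single (⟨l, by omega⟩ : Fin m) 1)
    (hbm : b m = ζ • EuclideanSpace.single (⟨m - 1, by omega⟩ : Fin m) 1) (l : Fin m) :
    b (l + 1) = bandVec ζ l := by
  unfold bandVec
  split_ifs with h
  · exact hbl _ (by omega) (by omega)
  · have hl : (l : ℕ) + 1 = m := by omega
    rw [hl, hbm]
    congr
    omega

end BandVectors

section ResidueClasses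

variable {m : ℕ}

/-- Zero-based coordinates `l` with `l + 1 ∈ L_i`. -/
def residueClass (n i : ℕ) : Finset (Fin m) := {l | ((l : ℕ) + 1) % n = (i - 1) % n}

theorem add_le_of_mem_residueClass {n i : ℕ} {l l' : Fin m}
    (hl : l ∈ residueClass n i) (hl' : l' ∈ residueClass n i) (hlt : l < l') :
    (l : ℕ) + n ≤ l' := by
  simp only [residueClass, Finset.mem_filter, Finset.mem_univ, true_and] at hl hl'
  have hdvd : n ∣ ((l' : ℕ) + 1) - ((l : ℕ) + 1) :=
    (Nat.modEq_iff_dvd' (by omega)).1 (hl.trans hl'.symm)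
  have := Nat.le_of_dvd (by omega) hdvd
  omega

theorem sum_sum_residueClass {M : Type*} [AddCommMonoid M] {n : ℕ} (hn : 0 < n)
    (g : Fin m → M) :
    ∑ i ∈ Finset.Icc 1 n, ∑ l ∈ residueClass n i, g l = ∑ l, g l := by
  rw [← Finset.sum_fiberwise_of_maps_to (g := fun l : Fin m => ((l : ℕ) + 1) % n + 1)
    (t := Finset.Icc 1 n) fun l _ => by
      simp only [Finset.mem_Icc]; have := Nat.mod_lt ((l : ℕ) + 1) hn; omega]
  refine Finset.sum_congr rfl fun i hi => Finset.sum_congr ?_ fun _ _ => rfl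
  ext l
  simp only [Finset.mem_Icc] at hi
  simp only [residueClass, Finset.mem_filter, Finset.mem_univ, true_and,
    Nat.mod_eq_of_lt (by omega : i - 1 < n)]
  omega

end ResidueClasses

section Decomposition

variable {m n : ℕ} {ζ : ℝ}

theorem pairwise_inner_bandVec_residueClass (hn : 2 ≤ n) (ζ : ℝ) (i : ℕ) :
    ((residueClass n i : Finset (Fin m)) : Set (Fin m)).Pairwise
      fun l l' => ⟪bandVec ζ l, bandVec ζ l'⟫ = 0 := by
  intro l hl l' hl' hne
  rcases lt_or_gt_of_ne hne with h | h
  · have := add_le_of_mem_residueClass hl hl' h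
    exact inner_bandVec_eq_zero ζ (by omega)
  · have := add_le_of_mem_residueClass hl' hl h
    rw [real_inner_comm]
    exact inner_bandVec_eq_zero ζ (by omega)

theorem norm_analysisOp_bandVec_sq_le (hn : 2 ≤ n) (hζ : ζ ^ 2 ≤ 2) (i : ℕ) :
    ‖analysisOp (residueClass n i) (bandVec (m := m) ζ)‖ ^ 2 ≤ 2 :=
  norm_analysisOp_sq_le zero_le_two (pairwise_inner_bandVec_residueClass hn ζ i)
    (norm_sq_bandVec_le hζ)

theorem sum_inner_bandVec_sq_le (hζ : ζ ^ 2 ≤ 2) (x : EuclideanSpace ℝ (Fin m)) :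
    ∑ l, ⟪bandVec ζ l, x⟫ ^ 2 ≤ 4 * ‖x‖ ^ 2 := by
  rw [← sum_sum_residueClass two_pos]
  calc ∑ i ∈ Finset.Icc 1 2, ∑ l ∈ residueClass 2 i, ⟪bandVec ζ l, x⟫ ^ 2
      = ∑ i ∈ Finset.Icc 1 2, ‖analysisOp (residueClass 2 i) (bandVec ζ) x‖ ^ 2 := by
        simp only [norm_sq_analysisOp]
    _ ≤ ∑ i ∈ Finset.Icc 1 2, 2 * ‖x‖ ^ 2 :=
        Finset.sum_le_sum fun i _ => (norm_apply_sq_le _ x).trans <| by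
          gcongr; exact norm_analysisOp_bandVec_sq_le le_rfl hζ i
    _ = 4 * ‖x‖ ^ 2 := by simp; ring

theorem sum_norm_sq_analysisOp_residueClass_le (hn : 2 ≤ n) (hζ : ζ ^ 2 ≤ 2)
    (x : EuclideanSpace ℝ (Fin m)) :
    ∑ i ∈ Finset.Icc 1 n, ‖analysisOp (residueClass n i) (bandVec ζ) x‖ ^ 2 ≤ 4 * ‖x‖ ^ 2 := by
  simp only [norm_sq_analysisOp]
  rw [sum_sum_residueClass (by omega)]
  exact sum_inner_bandVec_sq_le hζ x

theorem sum_norm_sq_adjoint_analysisOp_residueClass_le (hn : 2 ≤ n) (hζ : ζ ^ 2 ≤ 2)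
    (y : EuclideanSpace ℝ (Fin m)) :
    ∑ i ∈ Finset.Icc 1 n, ‖ContinuousLinearMap.adjoint
      (analysisOp (residueClass n i) (bandVec ζ)) y‖ ^ 2 ≤ 4 * ‖y‖ ^ 2 :=
  calc _ ≤ ∑ i ∈ Finset.Icc 1 n, 2 * ∑ l ∈ residueClass n i, y l ^ 2 :=
        Finset.sum_le_sum fun i _ => norm_sq_adjoint_analysisOp_le
          (pairwise_inner_bandVec_residueClass hn ζ i) (norm_sq_bandVec_le hζ) y
    _ = 2 * ∑ l, y l ^ 2 := by rw [← Finset.mul_sum, sum_sum_residueClass (by omega)]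
    _ ≤ 4 * ‖y‖ ^ 2 := by
        have := sum_sq_apply_le_norm_sq Finset.univ y
        nlinarith [sq_nonneg ‖y‖]

end Decomposition

/-- Properties of the bilinear convex–concave decomposition `r̃_i`: each
`r̃_i` is `(c̃₁, c̃₂)`-convex-concave and `√(4n² + 2 max{c̃₁,c̃₂}²)`-smooth in the joint
variable, and the family is `√(8n + 2 max{c̃₁,c̃₂}²)`-average smooth. -/
theorem decomposition_convex_concave_smoothness
    (n m : ℕ) (hn : 2 ≤ n) (hm : 2 ≤ m)
    (ζ c₁ c₂ : ℝ) (hc₁ : 0 ≤ c₁) (hc₂ : 0 ≤ c₂) (hζ : 0 ≤ ζ ∧ ζ ≤ Real.sqrt 2)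
    (b : ℕ → EuclideanSpace ℝ (Fin m))
    (hbl : ∀ (l : ℕ) (_h1 : 1 ≤ l) (_h2 : l ≤ m - 1),
      b l = EuclideanSpace.single (⟨l - 1, by omega⟩ : Fin m) 1
            - EuclideanSpace.single (⟨l, by omega⟩ : Fin m) 1)
    (hbm : b m = ζ • EuclideanSpace.single (⟨m - 1, by omega⟩ : Fin m) 1)
    (r : ℕ → EuclideanSpace ℝ (Fin m) → EuclideanSpace ℝ (Fin m) → ℝ)
    (hr : ∀ i : ℕ, 1 ≤ i → i ≤ n → ∀ x y,
      r i x y = (n : ℝ) *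
          (∑ l : Fin m,
            if ((l : ℕ) + 1) % n = (i - 1) % n then y l * ⟪b ((l : ℕ) + 1), x⟫ else 0)
        + (c₁ / 2) * ‖x‖ ^ 2 - (c₂ / 2) * ‖y‖ ^ 2
        - (if i = 1 then (n : ℝ) * x ⟨0, by omega⟩ else 0)) :
    (∀ i : ℕ, 1 ≤ i → i ≤ n →
      (∀ y, ConvexOn ℝ Set.univ
        (fun x => r i x y - (c₁ / 2) * ‖x‖ ^ 2 + (c₂ / 2) * ‖y‖ ^ 2)) ∧
      (∀ x, ConcaveOn ℝ Set.univ
        (fun y => r i x y - (c₁ / 2) * ‖x‖ ^ 2 + (c₂ / 2) * ‖y‖ ^ 2))) ∧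
    (∀ i : ℕ, 1 ≤ i → i ≤ n → ∀ u v,
      ‖gradient (jointFun (r i)) u - gradient (jointFun (r i)) v‖
        ≤ Real.sqrt (4 * n ^ 2 + 2 * max c₁ c₂ ^ 2) * ‖u - v‖) ∧
    (∀ u v, (1 / n : ℝ) *
        ∑ i ∈ Finset.Icc 1 n,
          ‖gradient (jointFun (r i)) u - gradient (jointFun (r i)) v‖ ^ 2
      ≤ Real.sqrt (8 * n + 2 * max c₁ c₂ ^ 2) ^ 2 * ‖u - v‖ ^ 2) := by
  have hζsq : ζ ^ 2 ≤ 2 := (Real.le_sqrt hζ.1 zero_le_two).1 hζ.2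
  set M := fun i => analysisOp (residueClass n i) (bandVec (m := m) ζ)
  set a : ℕ → EuclideanSpace ℝ (Fin m) := fun i =>
    if i = 1 then (n : ℝ) • EuclideanSpace.single ⟨0, by omega⟩ 1 else 0
  have hr' : ∀ i, 1 ≤ i → i ≤ n → r i = bilinearSaddle n c₁ c₂ (M i) (a i) := by
    intro i hi₁ hi₂
    ext x y
    rw [hr i hi₁ hi₂, bilinearSaddle, inner_analysisOp, residueClass, Finset.sum_filter]
    simp_rw [b_succ_eq_bandVec (by omega) hbl hbm]
    split_ifs with h <;> simp [a, h, real_inner_smul_left, EuclideanSpace.inner_single_left]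
  have hjoint : ∀ i ∈ Finset.Icc 1 n, jointFun (r i) = jointSaddle n c₁ c₂ (M i) (a i) :=
    fun i hi => by rw [hr' i (Finset.mem_Icc.1 hi).1 (Finset.mem_Icc.1 hi).2]; rfl
  refine ⟨fun i hi₁ hi₂ => ?_, fun i hi₁ hi₂ u v => ?_, fun u v => ?_⟩
  · rw [hr' i hi₁ hi₂]
    exact ⟨convexOn_bilinearSaddle_sub _ _ _ _ _, concaveOn_bilinearSaddle_sub _ _ _ _ _⟩
  · rw [hjoint i (Finset.mem_Icc.2 ⟨hi₁, hi₂⟩)]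
    refine (norm_gradient_jointSaddle_sub_le _ _ _ _ _ hc₁ hc₂ u v).trans ?_
    gcongr √(?_ + _) * _
    have hM : ‖M i‖ ^ 2 ≤ 2 := norm_analysisOp_bandVec_sq_le hn hζsq i
    nlinarith [mul_le_mul_of_nonneg_left hM (sq_nonneg (n : ℝ))]
  · rw [Finset.sum_congr rfl fun i hi => by rw [hjoint i hi]]
    have hsum := sum_norm_sq_gradient_jointSaddle_sub_le n c₁ c₂ (Finset.Icc 1 n) M a
      (sum_norm_sq_adjoint_analysisOp_residueClass_le hn hζsq)
      (sum_norm_sq_analysisOp_residueClass_le hn hζsq) hc₁ hc₂ u v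
    rw [Nat.card_Icc, Nat.add_sub_cancel] at hsum
    rw [Real.sq_sqrt (by positivity)]
    have hn0 : (0 : ℝ) < n := by positivity
    calc (1 / n : ℝ) * _ ≤ 1 / n * ((2 * n ^ 2 * 4 + 2 * n * max c₁ c₂ ^ 2) * ‖u - v‖ ^ 2) :=
          mul_le_mul_of_nonneg_left hsum (by positivity)
      _ = (8 * n + 2 * max c₁ c₂ ^ 2) * ‖u - v‖ ^ 2 := by field_simp; ring
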